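/- Let V < 0 be continuous with −V(x) ≤ C⟨x⟩^{-μ}, 0 < μ < 2. There exists c₀ > 0 (depending only on μ and C) such that for λ ≥ c₀⟨x⟩^{-μ/2}, x ≥ x', |x| ≥ |x'|: (1/4)|x−x'| ≤ ∫_{x'}^x λ(λ²−V(s))^{-1/2} ds ≤ |x−x'| and |∫_{x'}^x V(s)(λ²−V(s))^{-3/2} ds| ≤ |x−x'|/λ. -/

import Mathlib

open Set intervalIntegral

/-!
Since `λ² - V ≥ λ²`, the integrand `λ (λ² - V)^{-1/2}` is at most `1` and `|V| (λ² - V)^{-3/2}`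
is at most `(λ² - V)^{-1/2} ≤ 1/λ`, which gives the two upper bounds. For the lower bound take
`c₀ = 4√C`. On `[max x' (x/4), x]` we have `⟨s⟩ ≥ ⟨x⟩/4`, so `-V(s) ≤ 16 C ⟨x⟩^{-μ} ≤ λ²` (this is
where `μ ≤ 2` enters), hence `λ² - V ≤ 2λ²` and the integrand is at least `2/3` there. As
`|x'| ≤ |x|` forces `x' ≥ -x`, this subinterval has length at least `3/8 · (x - x')`.
-/

lemma rpow_neg_half_eq_inv_sqrt {u : ℝ} (hu : 0 ≤ u) : u ^ (-(1:ℝ)/2) = (√u)⁻¹ := by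
  rw [Real.sqrt_eq_rpow, ← Real.rpow_neg hu]
  norm_num

section Pointwise

variable {k l u v : ℝ}

lemma rpow_neg_half_le_inv (hl : 0 < l) (hu : l ^ 2 ≤ u) : u ^ (-(1:ℝ)/2) ≤ l⁻¹ := by
  rw [rpow_neg_half_eq_inv_sqrt ((sq_nonneg l).trans hu)]
  exact inv_anti₀ hl (Real.le_sqrt_of_sq_le hu)

lemma mul_rpow_neg_half_le_one (hl : 0 < l) (hu : l ^ 2 ≤ u) : l * u ^ (-(1:ℝ)/2) ≤ 1 :=
  calc l * u ^ (-(1:ℝ)/2) ≤ l * l⁻¹ := mul_le_mul_of_nonneg_left (rpow_neg_half_le_inv hl hu) hl.le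
    _ = 1 := mul_inv_cancel₀ hl.ne'

lemma inv_le_mul_rpow_neg_half (hk : 0 < k) (hl : 0 < l) (hu : 0 < u) (hku : u ≤ (k * l) ^ 2) :
    k⁻¹ ≤ l * u ^ (-(1:ℝ)/2) := by
  rw [rpow_neg_half_eq_inv_sqrt hu.le, ← div_eq_mul_inv, le_div_iff₀ (Real.sqrt_pos.2 hu),
    inv_mul_le_iff₀ hk]
  exact Real.sqrt_le_iff.2 ⟨by positivity, hku⟩

lemma abs_mul_rpow_neg_three_halves_le (hl : 0 < l) (hv : v ≤ 0) :
    |v * (l ^ 2 - v) ^ (-(3:ℝ)/2)| ≤ l⁻¹ := by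
  have hu : 0 < l ^ 2 - v := by linarith [pow_pos hl 2]
  calc |v * (l ^ 2 - v) ^ (-(3:ℝ)/2)| = -v * (l ^ 2 - v) ^ (-(3:ℝ)/2) := by
        rw [abs_mul, abs_of_nonpos hv, abs_of_pos (Real.rpow_pos_of_pos hu _)]
    _ ≤ (l ^ 2 - v) * (l ^ 2 - v) ^ (-(3:ℝ)/2) := by gcongr; linarith [sq_nonneg l]
    _ = (l ^ 2 - v) ^ (-(1:ℝ)/2) := by
        rw [← Real.rpow_one_add' hu.le (by norm_num)]
        norm_num
    _ ≤ l⁻¹ := rpow_neg_half_le_inv hl (by linarith)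

end Pointwise

lemma mul_sub_le_integral_of_le_on {f : ℝ → ℝ} {a b c m : ℝ} (hab : a ≤ b) (hbc : b ≤ c)
    (hf : Continuous f) (hf0 : ∀ s ∈ Icc a b, 0 ≤ f s) (hfm : ∀ s ∈ Icc b c, m ≤ f s) :
    m * (c - b) ≤ ∫ s in a..c, f s :=
  calc m * (c - b) = ∫ _ in b..c, m := by simp [mul_comm]
    _ ≤ ∫ s in b..c, f s := integral_mono_on hbc intervalIntegrable_const (hf.intervalIntegrable _ _) hfm
    _ ≤ (∫ s in a..b, f s) + ∫ s in b..c, f s := le_add_of_nonneg_left (integral_nonneg hab hf0)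
    _ = ∫ s in a..c, f s :=
        integral_add_adjacent_intervals (hf.intervalIntegrable _ _) (hf.intervalIntegrable _ _)

lemma one_add_sq_rpow_neg_le {μ k s x : ℝ} (hμ0 : 0 ≤ μ) (hμ2 : μ ≤ 2) (hk : 1 ≤ k)
    (hxs : x ^ 2 ≤ k * s ^ 2) : (1 + s ^ 2) ^ (-(μ/2)) ≤ k * (1 + x ^ 2) ^ (-(μ/2)) :=
  calc (1 + s ^ 2) ^ (-(μ/2)) ≤ ((1 + x ^ 2) / k) ^ (-(μ/2)) := by
        refine Real.rpow_le_rpow_of_nonpos (by positivity) ?_ (by linarith)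
        rw [div_le_iff₀ (by linarith)]
        nlinarith
    _ = k ^ (μ/2) * (1 + x ^ 2) ^ (-(μ/2)) := by
        have hk0 : 0 ≤ k := by linarith
        rw [Real.div_rpow (by positivity) hk0, Real.rpow_neg hk0 (μ/2), div_inv_eq_mul, mul_comm]
    _ ≤ k * (1 + x ^ 2) ^ (-(μ/2)) := by
        gcongr
        exact Real.rpow_le_self_of_one_le hk (by linarith)

lemma potential_le_sq_of_high_energy {μ C w s x l : ℝ} (hμ0 : 0 ≤ μ) (hμ2 : μ ≤ 2) (hC : 0 ≤ C)
    (hw : w ≤ C * (1 + s ^ 2) ^ (-(μ/2))) (hl : 4 * √C * (1 + x ^ 2) ^ (-(μ/4)) ≤ l)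
    (hxs : x ^ 2 ≤ 16 * s ^ 2) : w ≤ l ^ 2 :=
  calc w ≤ C * (1 + s ^ 2) ^ (-(μ/2)) := hw
    _ ≤ C * (16 * (1 + x ^ 2) ^ (-(μ/2))) := by
        gcongr
        exact one_add_sq_rpow_neg_le hμ0 hμ2 (by norm_num) hxs
    _ = (4 * √C * (1 + x ^ 2) ^ (-(μ/4))) ^ 2 := by
        rw [mul_pow, mul_pow, Real.sq_sqrt hC, ← Real.rpow_mul_natCast (by positivity)]
        ring_nf
    _ ≤ l ^ 2 := pow_le_pow_left₀ (by positivity) hl 2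

section Integrals

variable {V : ℝ → ℝ} {l x x' : ℝ}

lemma continuous_mul_sq_sub_rpow (hV : Continuous V) (hV0 : ∀ s, V s ≤ 0) (hl : 0 < l) (p : ℝ) :
    Continuous fun s => l * (l ^ 2 - V s) ^ p :=
  continuous_const.mul <|
    (continuous_const.sub hV).rpow_const fun s => Or.inl (show (0:ℝ) < l ^ 2 - V s by linarith [hV0 s, pow_pos hl 2]).ne'

lemma integral_mul_rpow_neg_half_le (hV : Continuous V) (hV0 : ∀ s, V s ≤ 0) (hl : 0 < l)
    (hxx' : x' ≤ x) : ∫ s in x'..x, l * (l ^ 2 - V s) ^ (-(1:ℝ)/2) ≤ x - x' :=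
  calc ∫ s in x'..x, l * (l ^ 2 - V s) ^ (-(1:ℝ)/2) ≤ ∫ _ in x'..x, (1:ℝ) :=
        integral_mono_on hxx' ((continuous_mul_sq_sub_rpow hV hV0 hl _).intervalIntegrable _ _)
          intervalIntegrable_const fun s _ => mul_rpow_neg_half_le_one hl (by linarith [hV0 s])
    _ = x - x' := by simp

lemma quarter_mul_le_integral_mul_rpow_neg_half (hV : Continuous V) (hV0 : ∀ s, V s ≤ 0)
    (hl : 0 < l) (hxx' : x' ≤ x) (habs : |x'| ≤ |x|) (hVl : ∀ s ∈ Icc (x/4) x, -V s ≤ l ^ 2) :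
    (1/4) * |x - x'| ≤ ∫ s in x'..x, l * (l ^ 2 - V s) ^ (-(1:ℝ)/2) := by
  rcases lt_or_ge x 0 with hx | hx
  · obtain rfl : x' = x := by
      rw [abs_of_neg hx, abs_of_neg (hxx'.trans_lt hx)] at habs
      linarith
    simp
  have hx' : -x ≤ x' := by linarith [neg_abs_le x', abs_of_nonneg hx]
  set a := max x' (x/4) with ha
  calc (1/4) * |x - x'| ≤ (3/2 : ℝ)⁻¹ * (x - a) := by
        rw [abs_of_nonneg (sub_nonneg.2 hxx')]
        rcases le_total x' (x/4) with h | h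
        · rw [ha, max_eq_right h]; linarith
        · rw [ha, max_eq_left h]; linarith
    _ ≤ ∫ s in x'..x, l * (l ^ 2 - V s) ^ (-(1:ℝ)/2) := by
        refine mul_sub_le_integral_of_le_on (le_max_left _ _) (max_le hxx' (by linarith))
          (continuous_mul_sq_sub_rpow hV hV0 hl _)
          (fun s _ => mul_nonneg hl.le (Real.rpow_nonneg (by linarith [hV0 s, sq_nonneg l]) _))
          fun s hs => inv_le_mul_rpow_neg_half (by norm_num) hl (by linarith [hV0 s, pow_pos hl 2]) ?_
        have := hVl s ⟨(le_max_right _ _).trans hs.1, hs.2⟩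
        nlinarith

lemma abs_integral_mul_rpow_neg_three_halves_le (hV0 : ∀ s, V s ≤ 0) (hl : 0 < l) :
    |∫ s in x'..x, V s * (l ^ 2 - V s) ^ (-(3:ℝ)/2)| ≤ |x - x'| / l := by
  have := norm_integral_le_of_norm_le_const (a := x') (b := x)
    (f := fun s => V s * (l ^ 2 - V s) ^ (-(3:ℝ)/2))
    fun s _ => abs_mul_rpow_neg_three_halves_le hl (hV0 s)
  simpa only [Real.norm_eq_abs, abs_sub_comm x', inv_mul_eq_div] using this

end Integrals

/-- High-energy approximation of the eikonal derivative: there is `c₀ > 0` depending only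
on `μ` and `C` such that for `λ ≥ c₀⟨x⟩^{-μ/2}`, `x ≥ x'`, `|x| ≥ |x'|`,
`(1/4)|x-x'| ≤ ∫_{x'}^x λ(λ²-V)^{-1/2} ds ≤ |x-x'|` and
`|∫_{x'}^x V (λ²-V)^{-3/2} ds| ≤ |x-x'|/λ`. -/
theorem high_energy_phase_approximation (μ C : ℝ) (hμ : μ ∈ Ioo (0:ℝ) 2) (hC : 0 < C) :
    ∃ c₀ > (0:ℝ), ∀ V : ℝ → ℝ, Continuous V → (∀ x, V x < 0) →
      (∀ x : ℝ, -V x ≤ C * (1 + x^2) ^ (-(μ/2))) →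
      ∀ (l x x' : ℝ), c₀ * (1 + x^2) ^ (-(μ/4)) ≤ l → x' ≤ x → |x'| ≤ |x| →
        ((1/4) * |x - x'| ≤ ∫ s in x'..x, l * (l^2 - V s) ^ (-(1:ℝ)/2)) ∧
        ((∫ s in x'..x, l * (l^2 - V s) ^ (-(1:ℝ)/2)) ≤ |x - x'|) ∧
        (|∫ s in x'..x, V s * (l^2 - V s) ^ (-(3:ℝ)/2)| ≤ |x - x'| / l) := by
  obtain ⟨hμ0, hμ2⟩ := hμ
  refine ⟨4 * √C, by positivity, fun V hV hVneg hVdecay l x x' hl hxx' habs => ?_⟩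
  have hl0 : 0 < l := lt_of_lt_of_le (by positivity) hl
  have hV0 : ∀ s, V s ≤ 0 := fun s => (hVneg s).le
  have hVl : ∀ s ∈ Icc (x/4) x, -V s ≤ l ^ 2 := fun s hs =>
    potential_le_sq_of_high_energy hμ0.le hμ2.le hC.le (hVdecay s) hl (by nlinarith [hs.1, hs.2])
  refine ⟨quarter_mul_le_integral_mul_rpow_neg_half hV hV0 hl0 hxx' habs hVl, ?_,
    abs_integral_mul_rpow_neg_three_halves_le hV0 hl0⟩
  rw [abs_of_nonneg (sub_nonneg.2 hxx')]
  exact integral_mul_rpow_neg_half_le hV hV0 hl0 hxx'
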